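/- arXiv:0907.1572 — 2 statements merged into one kernel-verified Lean document; each statement's English description precedes it below -/
import Mathlib

section
/- Let W be a standard Brownian motion, 0 < a < b, M ∈ ℝ, and Ψ(x) = ∫_x^∞ e^{−u²/2} du/√(2π). Then P(inf_{a≤t≤b} |W(t)−M| > 0) = ∫_ℝ [1 − 2Ψ(|v|/√(b−a))] · e^{−(M+v)²/(2a)}/√(2πa) dv. -/
open MeasureTheory ProbabilityTheory Real Set

/-- A standard one-dimensional Brownian motion on `[0,∞)`:
almost surely starts at `0`, has a.s. continuous paths, Gaussian
increments of the right variance, and independent increments. -/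
structure IsStdBrownianMotion {Ω : Type*} [MeasurableSpace Ω]
    (P : Measure Ω) (W : ℝ → Ω → ℝ) : Prop where
  isProb : IsProbabilityMeasure P
  meas : ∀ t, Measurable (W t)
  init : ∀ᵐ ω ∂P, W 0 ω = 0
  cont : ∀ᵐ ω ∂P, Continuous fun t => W t ω
  gauss : ∀ s t : ℝ, 0 ≤ s → s ≤ t →
    Measure.map (fun ω => W t ω - W s ω) P = gaussianReal 0 (t - s).toNNReal
  indep : ∀ (n : ℕ) (t : Fin (n + 1) → ℝ), (∀ i, 0 ≤ t i) → Monotone t →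
    iIndepFun
      (fun (i : Fin n) ω => W (t i.succ) ω - W (t i.castSucc) ω) P

/-- The upper tail of the standard Gaussian distribution. -/
noncomputable def gaussTail (x : ℝ) : ℝ :=
  ∫ u in Set.Ioi x, Real.exp (-u ^ 2 / 2) / Real.sqrt (2 * Real.pi)

open Filter Function Topology
open scoped ENNReal NNReal

/-!
Fix a level `u`, sample `W` at the dyadic points `a + (b - a) k / 2ⁿ` of `[a, b]` and consider the
first of them at which `W` is below `u`. The values of `W` up to that point are independent of
the remaining increment to `b`, a centred Gaussian, so exactly half of the paths that exit before
`b` end below their exit value: a discrete reflection principle. As `n → ∞`, continuity of the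
paths turns these reflected paths into `{W a ≥ u > W b}`, whence
`P(W a ≥ u) = P(W ≥ u on [a, b]) + 2 P(W a ≥ u > W b)`. Letting `u ↓ M`, and doing the same
for `-W`, gives `P(inf |W - M| > 0) = 1 - 2 P((W a - M) (W b - M) < 0)`; the last probability is
an integral against the law of the independent Gaussian pair `(W a, W b - W a)`.
-/

lemma gaussianPDFReal_zero_one (x : ℝ) :
    gaussianPDFReal 0 1 x = exp (-x ^ 2 / 2) / √(2 * π) := by
  simp [gaussianPDFReal, div_eq_inv_mul, mul_comm]

lemma gaussTail_eq_toReal (x : ℝ) : gaussTail x = (gaussianReal 0 1 (Ioi x)).toReal := by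
  rw [gaussianReal_apply_eq_integral _ one_ne_zero, ENNReal.toReal_ofReal
    (setIntegral_nonneg measurableSet_Ioi fun y _ => gaussianPDFReal_nonneg 0 1 y)]
  simp only [gaussTail, gaussianPDFReal_zero_one]

lemma gaussTail_nonneg (x : ℝ) : 0 ≤ gaussTail x := by
  rw [gaussTail_eq_toReal]
  exact ENNReal.toReal_nonneg

lemma gaussTail_le_one (x : ℝ) : gaussTail x ≤ 1 := by
  rw [gaussTail_eq_toReal]
  exact ENNReal.toReal_le_of_le_ofReal zero_le_one (by simp [prob_le_one])

lemma antitone_gaussTail : Antitone gaussTail := fun x y h => by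
  simp_rw [gaussTail_eq_toReal]
  exact ENNReal.toReal_mono (measure_ne_top _ _) (measure_mono (Ioi_subset_Ioi h))

lemma gaussianReal_Ioi_eq_gaussTail {v : ℝ≥0} (hv : v ≠ 0) (d : ℝ) :
    gaussianReal 0 v (Ioi d) = ENNReal.ofReal (gaussTail (d / √v)) := by
  have hs : 0 < √(v : ℝ) := by positivity
  have hmap : (gaussianReal 0 1).map (√v * ·) = gaussianReal 0 v := by
    rw [gaussianReal_map_const_mul, mul_zero, mul_one]
    congr
    simp
  rw [gaussTail_eq_toReal, ENNReal.ofReal_toReal (measure_ne_top _ _), ← hmap,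
    Measure.map_apply (by fun_prop) measurableSet_Ioi]
  congr 1
  ext x
  simp [div_lt_iff₀' hs]

lemma gaussianReal_Iio_neg (v : ℝ≥0) (d : ℝ) :
    gaussianReal 0 v (Iio (-d)) = gaussianReal 0 v (Ioi d) := by
  conv_rhs => rw [← neg_zero, ← gaussianReal_map_neg,
    Measure.map_apply measurable_neg measurableSet_Ioi]
  congr 1
  ext x
  simp

lemma gaussianReal_Iio_zero {v : ℝ≥0} (hv : v ≠ 0) : gaussianReal 0 v (Iio 0) = 2⁻¹ := by
  have := nullSingletonClass_gaussianReal (μ := 0) hv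
  have hsymm : gaussianReal 0 v (Iio 0) = gaussianReal 0 v (Ici 0) := by
    rw [← measure_congr Ioi_ae_eq_Ici, ← gaussianReal_Iio_neg, neg_zero]
  refine ENNReal.eq_inv_of_mul_eq_one_left ?_
  rw [mul_two]
  nth_rewrite 2 [hsymm]
  rw [← measure_union (Iio_disjoint_Ici le_rfl) measurableSet_Ici, Iio_union_Ici, measure_univ]

lemma integrable_gaussTail_comp {μ : Measure ℝ} [IsFiniteMeasure μ] {f : ℝ → ℝ}
    (hf : Measurable f) : Integrable (fun x => gaussTail (f x)) μ :=
  (integrable_const 1).mono' (antitone_gaussTail.measurable.comp hf).aestronglyMeasurable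
    (ae_of_all _ fun x => by simp [abs_of_nonneg (gaussTail_nonneg _), gaussTail_le_one])

lemma integral_gaussianReal_eq_integral_add {a : ℝ} (ha : 0 < a) (M : ℝ) (f : ℝ → ℝ) :
    ∫ x, f x ∂gaussianReal 0 a.toNNReal =
      ∫ v, f (M + v) * (exp (-(M + v) ^ 2 / (2 * a)) / √(2 * π * a)) := by
  rw [integral_gaussianReal_eq_integral_smul (by simpa using ha),
    ← integral_add_left_eq_self _ M]
  congr with v
  simp [gaussianPDFReal, Real.coe_toNNReal _ ha.le]
  ring

namespace IsStdBrownianMotion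

variable {Ω : Type*} [MeasurableSpace Ω] {P : Measure Ω} {W : ℝ → Ω → ℝ}

lemma neg (hW : IsStdBrownianMotion P W) : IsStdBrownianMotion P (fun t ω => -W t ω) where
  isProb := hW.isProb
  meas t := (hW.meas t).neg
  init := hW.init.mono fun ω h => by simp [h]
  cont := hW.cont.mono fun ω h => h.neg
  gauss s t hs hst := by
    have h : (fun ω => -W t ω - -W s ω) = (fun x => -x) ∘ fun ω => W t ω - W s ω := by
      ext
      simp only [comp_apply]
      ring
    rw [h, ← Measure.map_map (g := fun x => -x) (f := fun ω => W t ω - W s ω) measurable_neg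
      ((hW.meas t).sub (hW.meas s)), hW.gauss s t hs hst, gaussianReal_map_neg, neg_zero]
  indep n t ht hmono := by
    have h : (fun (i : Fin n) ω => -W (t i.succ) ω - -W (t i.castSucc) ω) =
        fun i => (fun x => -x) ∘ fun ω => W (t i.succ) ω - W (t i.castSucc) ω := by
      ext
      simp only [comp_apply]
      ring
    rw [h]
    exact (hW.indep n t ht hmono).comp _ fun _ => measurable_neg

lemma sub_initial (hW : IsStdBrownianMotion P W) :
    IsStdBrownianMotion P (fun t ω => W t ω - W 0 ω) where
  isProb := hW.isProb
  meas t := (hW.meas t).sub (hW.meas 0)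
  init := ae_of_all _ fun ω => sub_self _
  cont := hW.cont.mono fun ω h => h.sub continuous_const
  gauss s t hs hst := by simpa using hW.gauss s t hs hst
  indep n t ht hmono := by simpa using hW.indep n t ht hmono

lemma map_eq_gaussianReal (hW : IsStdBrownianMotion P W) (h0 : ∀ ω, W 0 ω = 0) {t : ℝ}
    (ht : 0 ≤ t) : P.map (W t) = gaussianReal 0 t.toNNReal := by
  simpa [h0] using hW.gauss 0 t le_rfl ht

lemma measure_setOf_eq_eq_zero (hW : IsStdBrownianMotion P W) (h0 : ∀ ω, W 0 ω = 0) {t : ℝ}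
    (ht : 0 < t) (x : ℝ) : P {ω | W t ω = x} = 0 := by
  have := nullSingletonClass_gaussianReal (μ := 0) (v := t.toNNReal) (by simpa using ht)
  rw [← measure_singleton (μ := gaussianReal 0 t.toNNReal) x,
    ← hW.map_eq_gaussianReal h0 ht.le, Measure.map_apply (hW.meas t) (measurableSet_singleton x)]
  rfl

lemma indepFun_past_increment (hW : IsStdBrownianMotion P W) (h0 : ∀ ω, W 0 ω = 0)
    {τ : ℕ → ℝ} (hτ : Monotone τ) (hτ0 : 0 ≤ τ 0) (k : ℕ) {t : ℝ} (ht : τ k ≤ t) :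
    IndepFun (fun ω (i : Fin (k + 1)) => W (τ i) ω) (fun ω => W t ω - W (τ k) ω) P := by
  -- The times `0 ≤ τ 0 ≤ ⋯ ≤ τ k ≤ t`: the `W (τ j)` are partial sums of the first `k + 1`
  -- increments along them, and `W t - W (τ k)` is the last one.
  set ρ : ℕ → ℝ := fun i => if i = 0 then 0 else if i ≤ k + 1 then τ (i - 1) else t with hρ
  have hρ_succ (i : ℕ) : ρ (i + 1) = if i ≤ k then τ i else t := by simp [hρ]
  have hρ_mono : Monotone ρ := by
    refine monotone_nat_of_le_succ fun i => ?_
    rcases i with _ | i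
    · simp [hρ, hτ0]
    · rw [hρ_succ, hρ_succ]
      split_ifs with h1 h2 h2
      exacts [hτ (by omega), (hτ (by omega)).trans ht, absurd h1 (by omega), le_rfl]
  set inc : ℕ → Ω → ℝ := fun i ω => W (ρ (i + 1)) ω - W (ρ i) ω
  have hinc : iIndepFun (fun i : Fin (k + 2) => inc i) P := by
    simpa [inc] using hW.indep (k + 2) (fun i => ρ i)
      (fun i => (hρ_mono (Nat.zero_le _)).trans' (by simp [hρ])) fun i j h => hρ_mono h
  have hpast (j : ℕ) (hj : j ≤ k) (ω : Ω) :
      W (τ j) ω = ∑ i ∈ Finset.range (j + 1), inc i ω := by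
    rw [Finset.sum_range_sub (fun i => W (ρ i) ω), hρ_succ, if_pos hj]
    simp [hρ, h0]
  set S : Finset (Fin (k + 2)) := {Fin.last (k + 1)}ᶜ
  set T : Finset (Fin (k + 2)) := {Fin.last (k + 1)}
  have hST := hinc.indepFun_finset S T disjoint_compl_left
    fun i => (hW.meas _).sub (hW.meas _)
  have hS (j : Fin (k + 1)) (i : Fin ((j : ℕ) + 1)) :
      (⟨i, i.isLt.trans (Nat.succ_lt_succ j.isLt)⟩ : Fin (k + 2)) ∈ S := by
    refine Finset.mem_compl.2 (Finset.notMem_singleton.2 (Fin.ne_of_val_ne ?_))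
    simp only [Fin.val_last]
    omega
  refine hST.comp (φ := fun z (j : Fin (k + 1)) => ∑ i : Fin ((j : ℕ) + 1), z ⟨_, hS j i⟩)
    (ψ := fun z => z ⟨Fin.last (k + 1), by simp [T]⟩)
    (measurable_pi_lambda _ fun j => by fun_prop)
    (measurable_pi_apply _) |>.congr (ae_of_all _ fun ω => funext fun j => ?_)
      (ae_of_all _ fun ω => ?_)
  · simp only [comp_apply]
    rw [hpast j (by omega), ← Fin.sum_univ_eq_sum_range (fun i => inc i ω)]
  · simp [inc, hρ_succ]

lemma map_prod_increment (hW : IsStdBrownianMotion P W) (h0 : ∀ ω, W 0 ω = 0) {s t : ℝ}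
    (hs : 0 ≤ s) (hst : s ≤ t) :
    P.map (fun ω => (W s ω, W t ω - W s ω)) =
      (gaussianReal 0 s.toNNReal).prod (gaussianReal 0 (t - s).toNNReal) := by
  have := hW.isProb
  have hind : IndepFun (W s) (fun ω => W t ω - W s ω) P :=
    (hW.indepFun_past_increment h0 (τ := fun _ => s) monotone_const hs 0 hst).comp
      (φ := fun z : Fin 1 → ℝ => z 0) (ψ := id) (by fun_prop) measurable_id
  rw [(indepFun_iff_map_prod_eq_prod_map_map (hW.meas s).aemeasurable
    (g := fun ω => W t ω - W s ω) ((hW.meas t).sub (hW.meas s)).aemeasurable).1 hind,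
    hW.map_eq_gaussianReal h0 hs, hW.gauss s t hs hst]

end IsStdBrownianMotion

noncomputable def dyadicPoint (a b : ℝ) (n k : ℕ) : ℝ := a + (b - a) * k / 2 ^ n

section Dyadic

variable {a b : ℝ}

@[simp]
lemma dyadicPoint_zero (a b : ℝ) (n : ℕ) : dyadicPoint a b n 0 = a := by simp [dyadicPoint]

@[simp]
lemma dyadicPoint_two_pow (a b : ℝ) (n : ℕ) : dyadicPoint a b n (2 ^ n) = b := by
  simp [dyadicPoint]

lemma dyadicPoint_succ_two_mul (a b : ℝ) (n k : ℕ) :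
    dyadicPoint a b (n + 1) (2 * k) = dyadicPoint a b n k := by
  simp only [dyadicPoint, pow_succ]
  push_cast
  field_simp

lemma dyadicPoint_succ_sub (a b : ℝ) (n k : ℕ) :
    dyadicPoint a b n (k + 1) - dyadicPoint a b n k = (b - a) / 2 ^ n := by
  simp only [dyadicPoint]
  push_cast
  ring

lemma monotone_dyadicPoint (hab : a ≤ b) (n : ℕ) : Monotone (dyadicPoint a b n) :=
  fun k l hkl => by
    simp only [dyadicPoint]
    gcongr

lemma dyadicPoint_mem_Icc (hab : a ≤ b) {n k : ℕ} (hk : k ≤ 2 ^ n) :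
    dyadicPoint a b n k ∈ Icc a b := by
  simpa using And.intro (monotone_dyadicPoint hab n (Nat.zero_le k))
    (monotone_dyadicPoint hab n hk)

lemma dyadicPoint_lt (hab : a < b) {n k : ℕ} (hk : k < 2 ^ n) : dyadicPoint a b n k < b := by
  have hk' : (k : ℝ) < 2 ^ n := by exact_mod_cast hk
  have : (b - a) * k / 2 ^ n < b - a := by
    rw [div_lt_iff₀ (by positivity)]
    exact mul_lt_mul_of_pos_left hk' (by linarith)
  simp only [dyadicPoint]
  linarith

lemma exists_dyadicPoint_near (hab : a < b) (n : ℕ) {t : ℝ} (ht : t ∈ Icc a b) :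
    ∃ k ≤ 2 ^ n, |dyadicPoint a b n k - t| ≤ (b - a) / 2 ^ n := by
  set x := (t - a) * 2 ^ n / (b - a) with hx_def
  have ht_eq : t = a + (b - a) * x / 2 ^ n := by
    rw [hx_def]
    field_simp [(sub_pos.2 hab).ne']
    ring
  clear_value x
  have hx0 : 0 ≤ x := by
    rw [hx_def]
    have := sub_nonneg.2 ht.1
    positivity
  have hx : x ≤ 2 ^ n := by
    rw [hx_def, div_le_iff₀ (by linarith)]
    nlinarith [ht.2, pow_pos (two_pos : (0 : ℝ) < 2) n]
  refine ⟨⌊x⌋₊, Nat.floor_le_of_le (by exact_mod_cast hx), ?_⟩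
  have hdiff : dyadicPoint a b n ⌊x⌋₊ - t = (b - a) * (⌊x⌋₊ - x) / 2 ^ n := by
    rw [ht_eq, dyadicPoint]
    ring
  have hfloor : |(⌊x⌋₊ : ℝ) - x| ≤ 1 := by
    rw [abs_le]
    constructor <;> linarith [Nat.floor_le hx0, Nat.lt_floor_add_one x]
  rw [hdiff, abs_div, abs_mul, abs_of_pos (sub_pos.2 hab),
    abs_of_pos (by positivity : (0 : ℝ) < 2 ^ n)]
  gcongr
  simpa using mul_le_mul_of_nonneg_left hfloor (sub_pos.2 hab).le

lemma eventually_div_two_pow_lt (a b : ℝ) {δ : ℝ} (hδ : 0 < δ) :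
    ∀ᶠ n : ℕ in atTop, (b - a) / 2 ^ n < δ :=
  ((tendsto_pow_atTop_atTop_of_one_lt one_lt_two).const_div_atTop (b - a)).eventually
    (gt_mem_nhds hδ)

lemma ContinuousOn.eventually_abs_dyadicPoint_succ_sub_lt {f : ℝ → ℝ}
    (hf : ContinuousOn f (Icc a b)) (hab : a ≤ b) {ε : ℝ} (hε : 0 < ε) :
    ∀ᶠ n in atTop, ∀ k < 2 ^ n,
      |f (dyadicPoint a b n (k + 1)) - f (dyadicPoint a b n k)| < ε := by
  obtain ⟨δ, hδ, hf⟩ := Metric.uniformContinuousOn_iff.1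
    (isCompact_Icc.uniformContinuousOn_of_continuous hf) ε hε
  filter_upwards [eventually_div_two_pow_lt a b hδ] with n hn k hk
  refine hf _ (dyadicPoint_mem_Icc hab hk) _ (dyadicPoint_mem_Icc hab hk.le) ?_
  rwa [Real.dist_eq, dyadicPoint_succ_sub,
    abs_of_nonneg (div_nonneg (sub_nonneg.2 hab) (by positivity))]

lemma ContinuousOn.le_of_forall_dyadicPoint_le {f : ℝ → ℝ} (hf : ContinuousOn f (Icc a b))
    (hab : a < b) {u : ℝ} (h : ∀ n, ∀ k ≤ 2 ^ n, u ≤ f (dyadicPoint a b n k)) {t : ℝ}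
    (ht : t ∈ Icc a b) : u ≤ f t := by
  refine le_of_forall_pos_lt_add fun ε hε => ?_
  obtain ⟨δ, hδ, hf⟩ := Metric.uniformContinuousOn_iff.1
    (isCompact_Icc.uniformContinuousOn_of_continuous hf) ε hε
  obtain ⟨n, hn⟩ := (eventually_div_two_pow_lt a b hδ).exists
  obtain ⟨k, hk, hkt⟩ := exists_dyadicPoint_near hab n ht
  have := hf _ (dyadicPoint_mem_Icc hab.le hk) t ht (by rw [Real.dist_eq]; linarith)
  rw [Real.dist_eq, abs_lt] at this
  linarith [h n k hk]

lemma ContinuousOn.forall_lt_or_forall_gt {f : ℝ → ℝ} (hf : ContinuousOn f (Icc a b))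
    (hab : a ≤ b) {M : ℝ} (hne : ∀ t ∈ Icc a b, f t ≠ M) :
    (∀ t ∈ Icc a b, f t < M) ∨ ∀ t ∈ Icc a b, M < f t := by
  have ha : a ∈ Icc a b := left_mem_Icc.2 hab
  rcases (hne a ha).lt_or_gt with hfa | hfa
  · refine .inl fun t ht => (hne t ht).lt_of_le ?_
    by_contra! hft
    obtain ⟨s, hs, hfs⟩ := isPreconnected_Icc.intermediate_value ha ht hf ⟨hfa.le, hft.le⟩
    exact hne s hs hfs
  · refine .inr fun t ht => (hne t ht).symm.lt_of_le ?_
    by_contra! hft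
    obtain ⟨s, hs, hfs⟩ := isPreconnected_Icc.intermediate_value ht ha hf ⟨hft.le, hfa.le⟩
    exact hne s hs hfs

lemma ContinuousOn.pos_iInf_abs_sub_iff {f : ℝ → ℝ} (hf : ContinuousOn f (Icc a b))
    (hab : a ≤ b) (M : ℝ) :
    0 < ⨅ t : Icc a b, |f t - M| ↔
      ∃ c > 0, (∀ t ∈ Icc a b, M + c ≤ f t) ∨ ∀ t ∈ Icc a b, -M + c ≤ -f t := by
  have : Nonempty (Icc a b) := ⟨⟨a, left_mem_Icc.2 hab⟩⟩
  constructor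
  · intro hpos
    have hbdd : BddBelow (range fun t : Icc a b => |f t - M|) :=
      ⟨0, by rintro _ ⟨s, rfl⟩; exact abs_nonneg _⟩
    have hle (t) (ht : t ∈ Icc a b) : ⨅ t : Icc a b, |f t - M| ≤ |f t - M| :=
      ciInf_le hbdd ⟨t, ht⟩
    have hne (t) (ht : t ∈ Icc a b) : f t ≠ M := fun he => by
      have := hle t ht
      rw [he, sub_self, abs_zero] at this
      linarith
    refine ⟨_, hpos, (hf.forall_lt_or_forall_gt hab hne).symm.imp (fun h t ht => ?_)
      (fun h t ht => ?_)⟩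
    · have := hle t ht
      rw [abs_of_pos (sub_pos.2 (h t ht))] at this
      linarith
    · have := hle t ht
      rw [abs_of_neg (sub_neg.2 (h t ht))] at this
      linarith
  · rintro ⟨c, hc, h⟩
    refine hc.trans_le (le_ciInf fun t => ?_)
    rcases h with h | h
    · have := h t t.2
      rw [abs_of_nonneg (by linarith)]
      linarith
    · have := h t t.2
      rw [abs_of_nonpos (by linarith)]
      linarith

lemma eventually_add_one_div_le_iff (M x : ℝ) :
    ∀ᶠ m : ℕ in atTop, M + 1 / (m + 1) ≤ x ↔ M < x := by
  rcases lt_or_ge M x with h | h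
  · filter_upwards [tendsto_one_div_add_atTop_nhds_zero_nat.eventually
      (gt_mem_nhds (sub_pos.2 h))] with m hm
    exact iff_of_true (by linarith) h
  · refine Eventually.of_forall fun m => iff_of_false ?_ h.not_gt
    have : (0 : ℝ) < 1 / (m + 1) := Nat.one_div_pos_of_nat
    linarith

end Dyadic

section Events

variable {Ω : Type*} (W : ℝ → Ω → ℝ) (u a b : ℝ)

def gridAbove (n : ℕ) : Set Ω := {ω | ∀ k ≤ 2 ^ n, u ≤ W (dyadicPoint a b n k) ω}

def dyadicAbove : Set Ω := ⋂ n, gridAbove W u a b n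

def gridExit (n j : ℕ) : Set Ω :=
  {ω | (∀ i ≤ j, u ≤ W (dyadicPoint a b n i) ω) ∧ W (dyadicPoint a b n (j + 1)) ω < u}

/-- The exit at the last step `j + 1 = 2 ^ n` is left out: there is no increment left to
reflect. -/
def reflectedExit (n : ℕ) : Set Ω :=
  ⋃ j ∈ Finset.range (2 ^ n - 1),
    gridExit W u a b n j ∩ {ω | W b ω < W (dyadicPoint a b n (j + 1)) ω}

def dyadicStrictlyAbove : Set Ω := ⋃ m : ℕ, dyadicAbove W (u + 1 / (m + 1)) a b

variable {W u a b}

section Measurability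

variable [MeasurableSpace Ω]

lemma measurableSet_gridAbove (hm : ∀ t, Measurable (W t)) (n : ℕ) :
    MeasurableSet (gridAbove W u a b n) := by
  simp only [gridAbove, ofPred_forall]
  exact .iInter fun k => .iInter fun _ => measurableSet_le measurable_const (hm _)

lemma measurableSet_dyadicAbove (hm : ∀ t, Measurable (W t)) :
    MeasurableSet (dyadicAbove W u a b) :=
  .iInter fun n => measurableSet_gridAbove hm n

lemma measurableSet_gridExit (hm : ∀ t, Measurable (W t)) (n j : ℕ) :
    MeasurableSet (gridExit W u a b n j) := by
  simp only [gridExit, ofPred_and, ofPred_forall]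
  exact (MeasurableSet.iInter fun i => .iInter fun _ =>
    measurableSet_le measurable_const (hm _)).inter (measurableSet_lt (hm _) measurable_const)

lemma measurableSet_reflectedExit (hm : ∀ t, Measurable (W t)) (n : ℕ) :
    MeasurableSet (reflectedExit W u a b n) :=
  .biUnion (Finset.countable_toSet _) fun j _ =>
    (measurableSet_gridExit hm n j).inter (measurableSet_lt (hm b) (hm _))

end Measurability

lemma antitone_gridAbove : Antitone (gridAbove W u a b) :=
  antitone_nat_of_succ_le fun n ω hω k hk => by
    simpa [dyadicPoint_succ_two_mul] using hω (2 * k) (by rw [pow_succ]; omega)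

lemma dyadicAbove_subset_setOf_le : dyadicAbove W u a b ⊆ {ω | u ≤ W a ω} :=
  fun ω hω => by simpa using mem_iInter.1 hω 0 0 (Nat.zero_le _)

lemma dyadicAbove_subset_of_le {u' : ℝ} (h : u ≤ u') :
    dyadicAbove W u' a b ⊆ dyadicAbove W u a b :=
  iInter_mono fun _ _ hω k hk => h.trans (hω k hk)

lemma setOf_le_diff_gridAbove (n : ℕ) :
    {ω | u ≤ W a ω} \ gridAbove W u a b n =
      ⋃ j ∈ Finset.range (2 ^ n), gridExit W u a b n j := by
  ext ω
  simp only [Set.mem_sdiff, gridAbove, gridExit, mem_iUnion, Finset.mem_range, exists_prop]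
  simp only [mem_ofPred_eq, not_forall, not_le, exists_prop]
  constructor
  · rintro ⟨hωa, hex⟩
    classical
    obtain ⟨hk, hku⟩ := Nat.find_spec hex
    have hk0 : Nat.find hex ≠ 0 := fun h => by rw [h, dyadicPoint_zero] at hku; linarith
    refine ⟨Nat.find hex - 1, by omega, fun i hi => ?_, by rwa [Nat.sub_add_cancel (by omega)]⟩
    by_contra! hiu
    exact Nat.find_min hex (by omega) ⟨by omega, hiu⟩
  · rintro ⟨j, hj, hle, hlt⟩
    exact ⟨by simpa using hle 0 (Nat.zero_le j), j + 1, hj, hlt⟩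

lemma gridAbove_subset_setOf_le (n : ℕ) : gridAbove W u a b n ⊆ {ω | u ≤ W a ω} :=
  fun ω hω => by simpa using hω 0 (Nat.zero_le _)

lemma pairwise_disjoint_gridExit (n : ℕ) : Pairwise (Disjoint on gridExit W u a b n) := by
  refine fun i j hij => disjoint_left.2 fun ω hi hj => ?_
  rcases hij.lt_or_gt with h | h
  · exact (hj.1 (i + 1) h).not_gt hi.2
  · exact (hi.1 (j + 1) h).not_gt hj.2

lemma reflectedExit_subset (n : ℕ) :
    reflectedExit W u a b n ⊆ {ω | u ≤ W a ω ∧ W b ω < u} := by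
  simp only [reflectedExit, iUnion_subset_iff]
  rintro j - ω ⟨⟨hle, hlt⟩, hb⟩
  exact ⟨by simpa using hle 0 (Nat.zero_le j), hb.trans hlt⟩

variable {ω : Ω}

lemma eventually_mem_reflectedExit_iff (hω : ContinuousOn (fun t => W t ω) (Icc a b))
    (hab : a ≤ b) : ∀ᶠ n in atTop, ω ∈ reflectedExit W u a b n ↔ u ≤ W a ω ∧ W b ω < u := by
  by_cases hR : u ≤ W a ω ∧ W b ω < u
  · filter_upwards [hω.eventually_abs_dyadicPoint_succ_sub_lt hab (sub_pos.2 hR.2)] with n hn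
    refine iff_of_true ?_ hR
    have hexit : ω ∈ {ω | u ≤ W a ω} \ gridAbove W u a b n :=
      ⟨hR.1, fun h => (h (2 ^ n) le_rfl).not_gt (by simpa using hR.2)⟩
    rw [setOf_le_diff_gridAbove] at hexit
    obtain ⟨j, hj, hexit⟩ := mem_iUnion₂.1 hexit
    rw [Finset.mem_range] at hj
    have hup : W b ω < W (dyadicPoint a b n (j + 1)) ω := by
      have := hn j hj
      rw [abs_lt] at this
      linarith [hexit.1 j le_rfl]
    have hj' : j < 2 ^ n - 1 := by
      by_contra!
      rw [show j + 1 = 2 ^ n by omega, dyadicPoint_two_pow] at hup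
      exact hup.false
    simp only [reflectedExit, mem_iUnion₂, Finset.mem_range]
    exact ⟨j, hj', hexit, hup⟩
  · exact Eventually.of_forall fun n => iff_of_false (fun h => hR (reflectedExit_subset n h)) hR

lemma eventually_notMem_gridExit_last (hω : ContinuousOn (fun t => W t ω) (Icc a b))
    (hab : a ≤ b) : ∀ᶠ n in atTop, ω ∉ gridExit W u a b n (2 ^ n - 1) := by
  by_cases hb : W b ω < u
  · filter_upwards [hω.eventually_abs_dyadicPoint_succ_sub_lt hab (sub_pos.2 hb)] with n hn hexit
    have := hn (2 ^ n - 1) (Nat.sub_lt Nat.one_le_two_pow one_pos)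
    rw [Nat.sub_add_cancel Nat.one_le_two_pow, dyadicPoint_two_pow, abs_lt] at this
    linarith [hexit.1 (2 ^ n - 1) le_rfl]
  · refine Eventually.of_forall fun n hexit => hb ?_
    simpa [Nat.sub_add_cancel Nat.one_le_two_pow] using hexit.2

lemma mem_dyadicAbove_iff (hω : ContinuousOn (fun t => W t ω) (Icc a b)) (hab : a < b) :
    ω ∈ dyadicAbove W u a b ↔ ∀ t ∈ Icc a b, u ≤ W t ω :=
  ⟨fun h _ ht => hω.le_of_forall_dyadicPoint_le hab (fun n => mem_iInter.1 h n) ht,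
    fun h => mem_iInter.2 fun _ _ hk => h _ (dyadicPoint_mem_Icc hab.le hk)⟩

lemma mem_dyadicStrictlyAbove_iff (hω : ContinuousOn (fun t => W t ω) (Icc a b)) (hab : a < b) :
    ω ∈ dyadicStrictlyAbove W u a b ↔ ∃ c > 0, ∀ t ∈ Icc a b, u + c ≤ W t ω := by
  simp only [dyadicStrictlyAbove, mem_iUnion, mem_dyadicAbove_iff hω hab]
  constructor
  · rintro ⟨m, hm⟩
    exact ⟨_, Nat.one_div_pos_of_nat, hm⟩
  · rintro ⟨c, hc, h⟩
    obtain ⟨m, hm⟩ := exists_nat_one_div_lt hc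
    exact ⟨m, fun t ht => (h t ht).trans' (by linarith)⟩

lemma disjoint_dyadicStrictlyAbove_neg :
    Disjoint (dyadicStrictlyAbove W u a b) (dyadicStrictlyAbove (fun t ω => -W t ω) (-u) a b) := by
  refine disjoint_left.2 fun ω h₁ h₂ => ?_
  obtain ⟨m, hm⟩ := mem_iUnion.1 h₁
  obtain ⟨m', hm'⟩ := mem_iUnion.1 h₂
  have h₁ : u + 1 / (m + 1) ≤ W a ω := dyadicAbove_subset_setOf_le hm
  have h₂ : -u + 1 / (m' + 1) ≤ -W a ω := dyadicAbove_subset_setOf_le hm'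
  have : (0 : ℝ) < 1 / (m + 1) := Nat.one_div_pos_of_nat
  have : (0 : ℝ) < 1 / (m' + 1) := Nat.one_div_pos_of_nat
  linarith

end Events

section Reflection

variable {Ω : Type*} [MeasurableSpace Ω] {P : Measure Ω} {W : ℝ → Ω → ℝ} {a b : ℝ}

lemma measure_gridExit_eq_two_mul (hW : IsStdBrownianMotion P W) (h0 : ∀ ω, W 0 ω = 0)
    (ha : 0 ≤ a) (hab : a < b) {u : ℝ} {n j : ℕ} (hj : j + 1 < 2 ^ n) :
    P (gridExit W u a b n j) =
      2 * P (gridExit W u a b n j ∩ {ω | W b ω < W (dyadicPoint a b n (j + 1)) ω}) := by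
  set t := dyadicPoint a b n (j + 1)
  have ht : t < b := dyadicPoint_lt hab hj
  have hind := hW.indepFun_past_increment h0 (monotone_dyadicPoint hab.le n) (by simpa using ha)
    (j + 1) ht.le
  set C : Set (Fin (j + 2) → ℝ) :=
    {x | (∀ i : Fin (j + 1), u ≤ x i.castSucc) ∧ x (Fin.last (j + 1)) < u}
  have hC : MeasurableSet C := by
    simp only [C, ofPred_and, ofPred_forall]
    exact (MeasurableSet.iInter fun i => measurableSet_le measurable_const
      (measurable_pi_apply _)).inter (measurableSet_lt (measurable_pi_apply _) measurable_const)
  have hexit : gridExit W u a b n j =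
      (fun ω (i : Fin (j + 2)) => W (dyadicPoint a b n i) ω) ⁻¹' C := by
    ext ω
    simp [gridExit, C, Fin.forall_iff]
  have hdown : {ω | W b ω < W t ω} = (fun ω => W b ω - W t ω) ⁻¹' Iio 0 := by
    ext
    simp
  have hvar : (b - t).toNNReal ≠ 0 := by simpa using ht
  rw [hdown, hexit, hind.measure_inter_preimage_eq_mul _ _ hC measurableSet_Iio,
    ← Measure.map_apply (f := fun ω => W b ω - W t ω) ((hW.meas b).sub (hW.meas t))
      measurableSet_Iio,
    hW.gauss t b (ha.trans (dyadicPoint_mem_Icc hab.le hj.le).1) ht.le,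
    gaussianReal_Iio_zero hvar, mul_comm, mul_assoc,
    ENNReal.inv_mul_cancel two_ne_zero ENNReal.ofNat_ne_top, mul_one]

lemma measure_setOf_le_eq_gridAbove_add (hW : IsStdBrownianMotion P W) (h0 : ∀ ω, W 0 ω = 0)
    (ha : 0 ≤ a) (hab : a < b) (u : ℝ) (n : ℕ) :
    P {ω | u ≤ W a ω} = P (gridAbove W u a b n) +
      (2 * P (reflectedExit W u a b n) + P (gridExit W u a b n (2 ^ n - 1))) := by
  have hm := hW.meas
  have hdisj := pairwise_disjoint_gridExit (W := W) (u := u) (a := a) (b := b) n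
  have hdisj' : Pairwise (Disjoint on fun j =>
      gridExit W u a b n j ∩ {ω | W b ω < W (dyadicPoint a b n (j + 1)) ω}) :=
    hdisj.mono fun i j h => h.mono inter_subset_left inter_subset_left
  rw [← union_eq_self_of_subset_left (gridAbove_subset_setOf_le (b := b) n),
    ← measure_add_sdiff (measurableSet_gridAbove hm n).nullMeasurableSet,
    setOf_le_diff_gridAbove,
    measure_biUnion_finset (hdisj.set_pairwise _) fun j _ => measurableSet_gridExit hm n j,
    ← Nat.sub_add_cancel (Nat.one_le_two_pow (n := n)), Finset.sum_range_succ,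
    Nat.sub_add_cancel Nat.one_le_two_pow, reflectedExit,
    measure_biUnion_finset (hdisj'.set_pairwise _) fun j _ =>
      (measurableSet_gridExit hm n j).inter (measurableSet_lt (hm b) (hm _)),
    Finset.mul_sum]
  congr 2
  refine Finset.sum_congr rfl fun j hj => measure_gridExit_eq_two_mul hW h0 ha hab ?_
  rw [Finset.mem_range] at hj
  omega

theorem measure_setOf_le_eq_dyadicAbove_add (hW : IsStdBrownianMotion P W)
    (h0 : ∀ ω, W 0 ω = 0) (ha : 0 ≤ a) (hab : a < b) (u : ℝ) :
    P {ω | u ≤ W a ω} = P (dyadicAbove W u a b) + 2 * P {ω | u ≤ W a ω ∧ W b ω < u} := by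
  have := hW.isProb
  have hm := hW.meas
  have hcont : ∀ᵐ ω ∂P, ContinuousOn (fun t => W t ω) (Icc a b) :=
    hW.cont.mono fun ω h => h.continuousOn
  have habove : Tendsto (fun n => P (gridAbove W u a b n)) atTop (𝓝 (P (dyadicAbove W u a b))) :=
    tendsto_measure_iInter_atTop (fun n => (measurableSet_gridAbove hm n).nullMeasurableSet)
      antitone_gridAbove ⟨0, measure_ne_top _ _⟩
  have hrefl : Tendsto (fun n => P (reflectedExit W u a b n)) atTop
      (𝓝 (P {ω | u ≤ W a ω ∧ W b ω < u})) :=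
    tendsto_measure_of_ae_tendsto_indicator_of_isFiniteMeasure atTop
      ((measurableSet_le measurable_const (hm a)).inter (measurableSet_lt (hm b) measurable_const))
      (measurableSet_reflectedExit hm)
      (hcont.mono fun ω h => eventually_mem_reflectedExit_iff h hab.le)
  have hlast : Tendsto (fun n => P (gridExit W u a b n (2 ^ n - 1))) atTop (𝓝 0) := by
    simpa using tendsto_measure_of_ae_tendsto_indicator_of_isFiniteMeasure atTop
      MeasurableSet.empty (fun n => measurableSet_gridExit hm n _) (hcont.mono fun ω h =>
        (eventually_notMem_gridExit_last h hab.le).mono fun n hn =>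
          iff_of_false hn (notMem_empty ω))
  have hlim := habove.add ((ENNReal.Tendsto.const_mul hrefl
    (Or.inr (ENNReal.ofNat_ne_top (n := 2)))).add hlast)
  rw [add_zero] at hlim
  exact tendsto_nhds_unique
    (tendsto_const_nhds.congr fun n => measure_setOf_le_eq_gridAbove_add hW h0 ha hab u n) hlim

theorem measure_setOf_lt_eq_dyadicStrictlyAbove_add (hW : IsStdBrownianMotion P W)
    (h0 : ∀ ω, W 0 ω = 0) (ha : 0 ≤ a) (hab : a < b) (M : ℝ) :
    P {ω | M < W a ω} = P (dyadicStrictlyAbove W M a b) + 2 * P {ω | M < W a ω ∧ W b ω < M} := by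
  have := hW.isProb
  have hm := hW.meas
  have hA : Tendsto (fun m : ℕ => P (dyadicAbove W (M + 1 / (m + 1)) a b)) atTop
      (𝓝 (P (dyadicStrictlyAbove W M a b))) :=
    tendsto_measure_iUnion_atTop fun m m' h => dyadicAbove_subset_of_le (by gcongr)
  have hbase : Tendsto (fun m : ℕ => P {ω | M + 1 / (m + 1) ≤ W a ω}) atTop
      (𝓝 (P {ω | M < W a ω})) :=
    tendsto_measure_of_tendsto_indicator_of_isFiniteMeasure atTop P
      (fun m => measurableSet_le measurable_const (hm a))
      fun ω => eventually_add_one_div_le_iff M (W a ω)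
  have hnull : ∀ᵐ ω ∂P, W b ω ≠ M :=
    measure_eq_zero_iff_ae_notMem.1 (hW.measure_setOf_eq_eq_zero h0 (ha.trans_lt hab) M)
  have hR : Tendsto (fun m : ℕ => P {ω | M + 1 / (m + 1) ≤ W a ω ∧ W b ω < M + 1 / (m + 1)})
      atTop (𝓝 (P {ω | M < W a ω ∧ W b ω < M})) := by
    refine tendsto_measure_of_ae_tendsto_indicator_of_isFiniteMeasure atTop
      ((measurableSet_lt measurable_const (hm a)).inter (measurableSet_lt (hm b) measurable_const))
      (fun m => (measurableSet_le measurable_const (hm a)).inter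
        (measurableSet_lt (hm b) measurable_const)) (hnull.mono fun ω hω => ?_)
    filter_upwards [eventually_add_one_div_le_iff M (W a ω),
      eventually_add_one_div_le_iff M (W b ω)] with m ha' hb'
    exact and_congr ha' (by rw [← not_le, hb', not_lt, hω.le_iff_lt])
  have hlim := hA.add (ENNReal.Tendsto.const_mul hR (Or.inr (ENNReal.ofNat_ne_top (n := 2))))
  exact tendsto_nhds_unique hbase
    (hlim.congr fun m => (measure_setOf_le_eq_dyadicAbove_add hW h0 ha hab _).symm)

lemma setOf_pos_iInf_abs_sub_ae_eq (hcont : ∀ᵐ ω ∂P, Continuous fun t => W t ω) (hab : a < b)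
    (M : ℝ) :
    {ω | 0 < ⨅ t : Icc a b, |W t ω - M|} =ᵐ[P]
      (dyadicStrictlyAbove W M a b ∪ dyadicStrictlyAbove (fun t ω => -W t ω) (-M) a b : Set Ω) := by
  refine eventuallyEq_set.2 (hcont.mono fun ω hω => ?_)
  rw [mem_ofPred_eq, hω.continuousOn.pos_iInf_abs_sub_iff hab.le, mem_union,
    mem_dyadicStrictlyAbove_iff hω.continuousOn hab,
    mem_dyadicStrictlyAbove_iff hω.neg.continuousOn hab]
  constructor
  · rintro ⟨c, hc, h | h⟩
    exacts [.inl ⟨c, hc, h⟩, .inr ⟨c, hc, h⟩]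
  · rintro (⟨c, hc, h⟩ | ⟨c, hc, h⟩)
    exacts [⟨c, hc, .inl h⟩, ⟨c, hc, .inr h⟩]

lemma measure_pos_iInf_abs_sub_add (hW : IsStdBrownianMotion P W) (h0 : ∀ ω, W 0 ω = 0)
    (ha : 0 < a) (hab : a < b) (M : ℝ) :
    P {ω | 0 < ⨅ t : Icc a b, |W t ω - M|} + 2 * P {ω | (W a ω - M) * (W b ω - M) < 0} = 1 := by
  have := hW.isProb
  have hm := hW.meas
  have habove := measure_setOf_lt_eq_dyadicStrictlyAbove_add hW h0 ha.le hab M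
  have hbelow :=
    measure_setOf_lt_eq_dyadicStrictlyAbove_add hW.neg (by simpa using h0) ha.le hab (-M)
  simp only [neg_lt_neg_iff] at hbelow
  have hcross : P {ω | (W a ω - M) * (W b ω - M) < 0} =
      P {ω | M < W a ω ∧ W b ω < M} + P {ω | W a ω < M ∧ M < W b ω} := by
    have hmeas : MeasurableSet {ω | W a ω < M ∧ M < W b ω} :=
      (measurableSet_lt (hm a) measurable_const).inter (measurableSet_lt measurable_const (hm b))
    have hdisj : Disjoint {ω | M < W a ω ∧ W b ω < M} {ω | W a ω < M ∧ M < W b ω} :=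
      disjoint_left.2 fun ω h₁ h₂ => h₁.1.not_gt h₂.1
    rw [← measure_union hdisj hmeas]
    congr 1
    ext ω
    simp only [mem_ofPred_eq, mem_union, mul_neg_iff, sub_pos, sub_neg]
  have hside : P {ω | M < W a ω} + P {ω | W a ω < M} = 1 := by
    have hdisj : Disjoint {ω | M < W a ω} {ω | W a ω < M} :=
      disjoint_left.2 fun ω (h₁ : M < W a ω) (h₂ : W a ω < M) => lt_asymm h₁ h₂
    rw [← measure_union hdisj (measurableSet_lt (hm a) measurable_const),
      ← prob_compl_eq_one_iff₀ ?_ |>.2 (hW.measure_setOf_eq_eq_zero h0 ha M)]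
    · congr 1
      ext ω
      simp [lt_or_lt_iff_ne, eq_comm]
    · exact (measurableSet_eq_fun (hm a) measurable_const).nullMeasurableSet
  rw [measure_congr (setOf_pos_iInf_abs_sub_ae_eq hW.cont hab M),
    measure_union disjoint_dyadicStrictlyAbove_neg (MeasurableSet.iUnion fun m =>
      measurableSet_dyadicAbove fun t => (hm t).neg), hcross, ← hside, habove, hbelow]
  ring

lemma measure_mul_sub_neg_eq_integral_gaussTail (hW : IsStdBrownianMotion P W)
    (h0 : ∀ ω, W 0 ω = 0) (ha : 0 < a) (hab : a < b) (M : ℝ) :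
    P {ω | (W a ω - M) * (W b ω - M) < 0} =
      ENNReal.ofReal (∫ x, gaussTail (|x - M| / √(b - a)) ∂gaussianReal 0 a.toNNReal) := by
  have hvar : (b - a).toNNReal ≠ 0 := by simpa using hab
  have := nullSingletonClass_gaussianReal (μ := 0) (v := a.toNNReal) (by simpa using ha)
  set S : Set (ℝ × ℝ) := {p | (p.1 - M) * (p.1 + p.2 - M) < 0}
  have hS : MeasurableSet S := measurableSet_lt (by fun_prop) measurable_const
  have hpre : {ω | (W a ω - M) * (W b ω - M) < 0} =
      (fun ω => (W a ω, W b ω - W a ω)) ⁻¹' S := by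
    ext ω
    simp [S]
  rw [hpre, ← Measure.map_apply (f := fun ω => (W a ω, W b ω - W a ω))
      ((hW.meas a).prodMk ((hW.meas b).sub (hW.meas a))) hS,
    hW.map_prod_increment h0 ha.le hab.le, Measure.prod_apply hS,
    ofReal_integral_eq_lintegral_ofReal (integrable_gaussTail_comp (by fun_prop))
      (ae_of_all _ fun x => gaussTail_nonneg _)]
  refine lintegral_congr_ae ((measure_eq_zero_iff_ae_notMem.1 (measure_singleton M)).mono
    fun x hx => ?_)
  beta_reduce
  rcases Ne.lt_or_gt (mem_singleton_iff.not.1 hx) with hxM | hxM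
  · have hsec : Prod.mk x ⁻¹' S = Ioi |x - M| := by
      ext z
      simp only [S, mem_preimage, mem_ofPred_eq, mem_Ioi, abs_of_neg (sub_neg.2 hxM)]
      constructor <;> intro hz <;> nlinarith
    rw [hsec, gaussianReal_Ioi_eq_gaussTail hvar, Real.coe_toNNReal _ (sub_nonneg.2 hab.le)]
  · have hsec : Prod.mk x ⁻¹' S = Iio (-|x - M|) := by
      ext z
      simp only [S, mem_preimage, mem_ofPred_eq, mem_Iio, abs_of_pos (sub_pos.2 hxM)]
      constructor <;> intro hz <;> nlinarith
    rw [hsec, gaussianReal_Iio_neg, gaussianReal_Ioi_eq_gaussTail hvar,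
      Real.coe_toNNReal _ (sub_nonneg.2 hab.le)]

lemma toReal_measure_pos_iInf_abs_sub (hW : IsStdBrownianMotion P W) (h0 : ∀ ω, W 0 ω = 0)
    (ha : 0 < a) (hab : a < b) (M : ℝ) :
    (P {ω | 0 < ⨅ t : Icc a b, |W t ω - M|}).toReal =
      ∫ x, (1 - 2 * gaussTail (|x - M| / √(b - a))) ∂gaussianReal 0 a.toNNReal := by
  have := hW.isProb
  have hsum := congrArg ENNReal.toReal (measure_pos_iInf_abs_sub_add hW h0 ha hab M)
  rw [measure_mul_sub_neg_eq_integral_gaussTail hW h0 ha hab M,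
    ENNReal.toReal_add (measure_ne_top _ _) (by finiteness), ENNReal.toReal_mul,
    ENNReal.toReal_ofReal (integral_nonneg fun _ => gaussTail_nonneg _)] at hsum
  rw [integral_sub (integrable_const 1) ((integrable_gaussTail_comp (by fun_prop)).const_mul 2),
    integral_const_mul]
  simp only [ENNReal.toReal_ofNat, ENNReal.toReal_one] at hsum
  simp only [integral_const, probReal_univ, smul_eq_mul, mul_one]
  linarith

end Reflection

theorem stmt4 {Ω : Type*} [MeasurableSpace Ω] (P : Measure Ω) (W : ℝ → Ω → ℝ)
    (hW : IsStdBrownianMotion P W) (M : ℝ) (a b : ℝ) (ha : 0 < a) (hab : a < b) :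
    (P {ω | 0 < ⨅ t : Set.Icc a b, |W t ω - M|}).toReal =
      ∫ v : ℝ,
        (1 - 2 * gaussTail (|v| / Real.sqrt (b - a))) *
          (Real.exp (-(M + v) ^ 2 / (2 * a)) / Real.sqrt (2 * Real.pi * a)) := by
  have hevent : {ω | 0 < ⨅ t : Icc a b, |W t ω - M|} =ᵐ[P]
      {ω | 0 < ⨅ t : Icc a b, |(W t ω - W 0 ω) - M|} := by
    refine eventuallyEq_set.2 (hW.init.mono fun ω hω => ?_)
    simp only [mem_ofPred_eq, hω, sub_zero]
  rw [measure_congr hevent,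
    toReal_measure_pos_iInf_abs_sub hW.sub_initial (fun _ => sub_self _) ha hab M,
    integral_gaussianReal_eq_integral_add ha M]
  simp_rw [add_sub_cancel_left]
end

section
/- Let W be a standard Brownian motion, 0 < a < b, η > 0, and β = inf_{a≤t≤b} |W(t)|. Then P(0 < β ≤ η) ≤ (16η/√(2π)) · min(1/√(b−a), 1/√a). -/
open MeasureTheory ProbabilityTheory Real Set

/-! Sample `W` at time `0` and at the `N + 1` equally spaced points of `[a, b]`: the increments
are independent centred Gaussians, so the samples form a random walk with symmetric steps whose
endpoint `W b` has law `N(0, b)`. If `0 < β ≤ η`, the path keeps one sign on `[a, b]` and, for all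
large `N`, comes within `2η` of `0` at a grid point while every grid step inside `[a, b]` is at
most `η`. For a walk with symmetric steps, reflecting the steps after the first passage below `c`
bounds the probability that all partial sums are positive, one of them is `≤ c` and all steps but
the first are `≤ δ` by `P(S ∈ (0, c]) + P(S ∈ [-2δ, c))`, `S` the endpoint. With `c = 2η`,
`δ = η`, both signs, and the Gaussian density at most `1/√(2πb)`, each grid event has probability
at most `16η/√(2πb)`. As the admissible `N` depends on the path, the event is a.s. contained in
the lim inf of the grid events; finally `√b ≥ max (√a) (√(b - a))`. -/

open Filter
open scoped NNReal ENNReal Topology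

lemma measure_setOf_eventually_le {α ι : Type*} [MeasurableSpace α] [Preorder ι]
    [IsDirectedOrder ι] [Nonempty ι] [(atTop : Filter ι).IsCountablyGenerated]
    (μ : Measure α) {s : ι → Set α} {C : ℝ≥0∞} (h : ∀ᶠ i in atTop, μ (s i) ≤ C) :
    μ {x | ∀ᶠ i in atTop, x ∈ s i} ≤ C := by
  have hliminf : {x | ∀ᶠ i in atTop, x ∈ s i} = ⋃ i, ⋂ j ≥ i, s j := by
    ext x
    simp [eventually_atTop]
  rw [hliminf, Monotone.measure_iUnion fun i i' hii' =>
    biInter_subset_biInter_left fun j hj => hii'.trans hj]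
  refine iSup_le fun i => ?_
  obtain ⟨j, hj, hij⟩ := (h.and (eventually_ge_atTop i)).exists
  exact (measure_mono (biInter_subset_of_mem hij)).trans hj

lemma gaussianReal_le_ofReal_mul_volume (μ : ℝ) {v : ℝ≥0} (hv : v ≠ 0) (s : Set ℝ) :
    gaussianReal μ v s ≤ ENNReal.ofReal (√(2 * π * v))⁻¹ * volume s := by
  rw [gaussianReal_apply μ hv s, ← setLIntegral_const]
  refine lintegral_mono fun x => ENNReal.ofReal_le_ofReal ?_
  rw [gaussianPDFReal_def]
  refine mul_le_of_le_one_right (by positivity) (exp_le_one_iff.2 ?_)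
  exact div_nonpos_of_nonpos_of_nonneg (neg_nonpos.2 (sq_nonneg _)) (by positivity)

lemma gaussianReal_Icc_le (μ : ℝ) {v : ℝ≥0} (hv : v ≠ 0) (x y : ℝ) :
    gaussianReal μ v (Icc x y) ≤ ENNReal.ofReal ((y - x) / √(2 * π * v)) := by
  refine (gaussianReal_le_ofReal_mul_volume μ hv _).trans_eq ?_
  rw [volume_Icc, ← ENNReal.ofReal_mul (by positivity), div_eq_inv_mul]

instance (v : ℝ≥0) : (gaussianReal 0 v).IsNegInvariant :=
  ⟨by simpa [Measure.neg_def] using gaussianReal_map_neg (μ := 0) (v := v)⟩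

lemma forall_pos_or_forall_neg_of_ne_zero {X : Type*} [TopologicalSpace X] {s : Set X}
    {f : X → ℝ} (hs : IsPreconnected s) (hf : ContinuousOn f s) (h0 : ∀ x ∈ s, f x ≠ 0) :
    (∀ x ∈ s, 0 < f x) ∨ (∀ x ∈ s, f x < 0) := by
  by_contra! ⟨⟨x, hx, hfx⟩, ⟨y, hy, hfy⟩⟩
  obtain ⟨z, hz, hfz⟩ := hs.intermediate_value hx hy hf ⟨hfx, hfy⟩
  exact h0 z hz hfz

namespace SymmetricWalk

variable {n : ℕ}

def partialSum (y : Fin (n + 1) → ℝ) (k : Fin (n + 1)) : ℝ := ∑ i ∈ Finset.Iic k, y i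

lemma partialSum_zero (y : Fin (n + 1) → ℝ) : partialSum y 0 = y 0 := by
  simp [partialSum, ← bot_eq_zero, Finset.Iic_bot]

lemma partialSum_succ (y : Fin (n + 1) → ℝ) (j : Fin n) :
    partialSum y j.succ = partialSum y j.castSucc + y j.succ := by
  have hIic : Finset.Iic j.succ = insert j.succ (Finset.Iic j.castSucc) := by
    ext i
    rw [Finset.mem_insert, Finset.mem_Iic, Finset.mem_Iic, Fin.le_castSucc_iff, le_iff_eq_or_lt]
  simp only [partialSum, hIic, Finset.sum_insert (by simp : j.succ ∉ Finset.Iic j.castSucc),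
    add_comm]

lemma partialSum_last (y : Fin (n + 1) → ℝ) : partialSum y (Fin.last n) = ∑ i, y i := by
  simp [partialSum, ← Fin.top_eq_last, Finset.Iic_top]

lemma partialSum_neg (y : Fin (n + 1) → ℝ) (k : Fin (n + 1)) :
    partialSum (-y) k = -partialSum y k := by
  simp [partialSum]

lemma partialSum_telescope (g : ℕ → ℝ) (k : Fin (n + 1)) :
    partialSum (fun i => g (i + 1) - g i) k = g (k + 1) - g 0 := by
  induction k using Fin.induction with
  | zero => simp [partialSum_zero]
  | succ j ih => rw [partialSum_succ, ih]; simp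

@[fun_prop]
lemma measurable_partialSum (k : Fin (n + 1)) :
    Measurable fun y : Fin (n + 1) → ℝ => partialSum y k := by
  unfold partialSum
  fun_prop

def reflect (k : Fin (n + 1)) (y : Fin (n + 1) → ℝ) : Fin (n + 1) → ℝ :=
  fun i => if i ≤ k then y i else -y i

lemma partialSum_reflect_of_le (y : Fin (n + 1) → ℝ) {j k : Fin (n + 1)} (hjk : j ≤ k) :
    partialSum (reflect k y) j = partialSum y j :=
  Finset.sum_congr rfl fun _ hi => if_pos ((Finset.mem_Iic.1 hi).trans hjk)

lemma partialSum_last_reflect (y : Fin (n + 1) → ℝ) (k : Fin (n + 1)) :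
    partialSum (reflect k y) (Fin.last n) = 2 * partialSum y k - partialSum y (Fin.last n) := by
  have hIic : Finset.univ.filter (· ≤ k) = Finset.Iic k := by ext; simp
  simp only [partialSum_last, reflect, Finset.sum_ite, Finset.sum_neg_distrib]
  rw [← Finset.sum_filter_add_sum_filter_not Finset.univ (· ≤ k) y, hIic, partialSum]
  ring

lemma abs_reflect (y : Fin (n + 1) → ℝ) (k i : Fin (n + 1)) : |reflect k y i| = |y i| := by
  unfold reflect
  split_ifs <;> simp

def firstHit (c : ℝ) (k : Fin (n + 1)) : Set (Fin (n + 1) → ℝ) :=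
  {y | (∀ j < k, c < partialSum y j) ∧ partialSum y k ≤ c}

def hitsBelow (c : ℝ) : Set (Fin (n + 1) → ℝ) := {y | ∃ k, partialSum y k ≤ c}

lemma measurableSet_firstHit (c : ℝ) (k : Fin (n + 1)) : MeasurableSet (firstHit c k) := by
  unfold firstHit
  measurability

lemma pairwise_disjoint_firstHit (c : ℝ) :
    Pairwise (Function.onFun Disjoint (firstHit (n := n) c)) := by
  intro k l hkl
  rcases hkl.lt_or_gt with h | h
  · exact disjoint_left.2 fun y hk hl => (hl.1 k h).not_ge hk.2
  · exact disjoint_left.2 fun y hk hl => (hk.1 l h).not_ge hl.2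

lemma iUnion_firstHit (c : ℝ) : ⋃ k, firstHit c k = hitsBelow (n := n) c := by
  ext y
  simp only [mem_iUnion, hitsBelow, mem_ofPred_eq]
  refine ⟨fun ⟨k, hk⟩ => ⟨k, hk.2⟩, fun ⟨k, hk⟩ => ?_⟩
  obtain ⟨m, hm, hmin⟩ := wellFounded_lt.has_min {k | partialSum y k ≤ c} ⟨k, hk⟩
  exact ⟨m, fun j hj => not_le.1 fun h => hmin j h hj, hm⟩

lemma measurableSet_hitsBelow (c : ℝ) : MeasurableSet (hitsBelow (n := n) c) :=
  iUnion_firstHit c ▸ .iUnion (measurableSet_firstHit c)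

lemma reflect_mem_firstHit_iff (c : ℝ) (k : Fin (n + 1)) (y : Fin (n + 1) → ℝ) :
    reflect k y ∈ firstHit c k ↔ y ∈ firstHit c k := by
  simp +contextual only [firstHit, mem_ofPred_eq, partialSum_reflect_of_le y le_rfl,
    partialSum_reflect_of_le y (le_of_lt _)]

def smallSteps (δ : ℝ) : Set (Fin (n + 1) → ℝ) := {y | ∀ i ≠ 0, |y i| ≤ δ}

lemma measurableSet_smallSteps (δ : ℝ) : MeasurableSet (smallSteps (n := n) δ) := by
  simp only [smallSteps, ofPred_forall]
  exact .iInter fun i => .iInter fun _ => measurableSet_le (by fun_prop) measurable_const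

def minMemIoc (c : ℝ) : Set (Fin (n + 1) → ℝ) :=
  {y | (∀ k, 0 < partialSum y k) ∧ ∃ k, partialSum y k ≤ c}

lemma minMemIoc_inter_smallSteps_union {c : ℝ} (hc : 0 ≤ c) (δ : ℝ) :
    minMemIoc c ∩ smallSteps δ ∪ {y | 0 < y 0} ∩ smallSteps δ ∩ hitsBelow 0 =
      {y : Fin (n + 1) → ℝ | 0 < y 0} ∩ smallSteps δ ∩ hitsBelow c := by
  ext y
  simp only [minMemIoc, hitsBelow, mem_union, mem_inter_iff, mem_ofPred_eq]
  constructor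
  · rintro (⟨⟨hpos, hk⟩, hy⟩ | ⟨hD, k, hk⟩)
    · exact ⟨⟨partialSum_zero y ▸ hpos 0, hy⟩, hk⟩
    · exact ⟨hD, k, hk.trans hc⟩
  · rintro ⟨hD, hk⟩
    by_cases h0 : ∃ k, partialSum y k ≤ 0
    · exact .inr ⟨hD, h0⟩
    · exact .inl ⟨⟨fun k => not_le.1 fun h => h0 ⟨k, h⟩, hk⟩, hD.2⟩

lemma disjoint_minMemIoc_hitsBelow_zero (c : ℝ) :
    Disjoint (minMemIoc (n := n) c) (hitsBelow 0) :=
  disjoint_left.2 fun _ hy ⟨k, hk⟩ => (hy.1 k).not_ge hk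

variable (ν : Fin (n + 1) → Measure ℝ) [∀ i, SigmaFinite (ν i)] [∀ i, (ν i).IsNegInvariant]

lemma measurePreserving_reflect (k : Fin (n + 1)) :
    MeasurePreserving (reflect k) (Measure.pi ν) (Measure.pi ν) := by
  have hf (i : Fin (n + 1)) : MeasurePreserving (if i ≤ k then id else Neg.neg) (ν i) (ν i) := by
    split_ifs
    exacts [.id _, Measure.measurePreserving_neg _]
  convert measurePreserving_pi ν ν hf using 2 with y
  ext i
  unfold reflect
  split_ifs <;> rfl

lemma measurePreserving_neg_pi :
    MeasurePreserving (Neg.neg : (Fin (n + 1) → ℝ) → _) (Measure.pi ν) (Measure.pi ν) :=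
  measurePreserving_pi ν ν fun i => Measure.measurePreserving_neg (ν i)

section Reflection

variable {ν} {D : Set (Fin (n + 1) → ℝ)}

lemma measure_firstHit_reflect (hD : MeasurableSet D) (hDr : ∀ k y, reflect k y ∈ D ↔ y ∈ D)
    (c : ℝ) (k : Fin (n + 1)) :
    Measure.pi ν (D ∩ firstHit c k ∩ {y | c < partialSum y (Fin.last n)}) =
      Measure.pi ν
        (D ∩ firstHit c k ∩ {y | c < 2 * partialSum y k - partialSum y (Fin.last n)}) := by
  rw [← (measurePreserving_reflect ν k).measure_preimage
    ((hD.inter (measurableSet_firstHit c k)).inter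
      (measurableSet_lt measurable_const (by fun_prop))).nullMeasurableSet]
  congr 1
  ext y
  simp only [mem_preimage, mem_inter_iff, mem_ofPred_eq, hDr, reflect_mem_firstHit_iff,
    partialSum_last_reflect]

-- Reflection principle: reflecting the steps after the first passage `k` below `c` maps
-- `{c < S_n}` onto `{c < 2 S_k - S_n}`.
theorem measure_inter_hitsBelow_eq (hD : MeasurableSet D) (hDr : ∀ k y, reflect k y ∈ D ↔ y ∈ D)
    (c : ℝ) :
    Measure.pi ν (D ∩ hitsBelow c) =
      Measure.pi ν (D ∩ {y | partialSum y (Fin.last n) ≤ c}) +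
        Measure.pi ν (⋃ k, D ∩ firstHit c k ∩
          {y | c < 2 * partialSum y k - partialSum y (Fin.last n)}) := by
  rw [← measure_inter_add_sdiff _ (measurableSet_le (measurable_partialSum _) measurable_const)]
  congr 1
  · congr 1
    ext y
    simp only [hitsBelow, mem_inter_iff, mem_ofPred_eq]
    exact ⟨fun h => ⟨h.1.1, h.2⟩, fun h => ⟨⟨h.1, _, h.2⟩, h.2⟩⟩
  have hdiff : (D ∩ hitsBelow c) \ {y | partialSum y (Fin.last n) ≤ c} =
      ⋃ k, D ∩ firstHit c k ∩ {y | c < partialSum y (Fin.last n)} := by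
    rw [← iUnion_inter, ← inter_iUnion, iUnion_firstHit]
    ext y
    simp only [Set.mem_sdiff, mem_inter_iff, mem_ofPred_eq, not_le]
  have hdisj {s : Fin (n + 1) → Set (Fin (n + 1) → ℝ)} :
      Pairwise (Function.onFun Disjoint fun k => D ∩ firstHit c k ∩ s k) :=
    fun k l hkl => (pairwise_disjoint_firstHit c hkl).mono
      (inter_subset_left.trans inter_subset_right) (inter_subset_left.trans inter_subset_right)
  have hmeas (k : Fin (n + 1)) {f : (Fin (n + 1) → ℝ) → ℝ} (hf : Measurable f) :
      MeasurableSet (D ∩ firstHit c k ∩ {y | c < f y}) :=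
    (hD.inter (measurableSet_firstHit c k)).inter (measurableSet_lt measurable_const hf)
  rw [hdiff, measure_iUnion hdisj fun k => hmeas k (by fun_prop),
    measure_iUnion hdisj fun k => hmeas k (by fun_prop)]
  exact tsum_congr (measure_firstHit_reflect hD hDr c)

lemma measure_inter_hitsBelow_le (hD : MeasurableSet D) (hDr : ∀ k y, reflect k y ∈ D ↔ y ∈ D)
    (c : ℝ) :
    Measure.pi ν (D ∩ hitsBelow c) ≤
      Measure.pi ν (D ∩ {y | partialSum y (Fin.last n) ≤ c}) +
        Measure.pi ν (D ∩ {y | partialSum y (Fin.last n) < c}) := by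
  rw [measure_inter_hitsBelow_eq hD hDr c]
  gcongr
  refine iUnion_subset fun k y ⟨⟨hyD, hyk⟩, hy⟩ => ⟨hyD, ?_⟩
  simp only [mem_ofPred_eq] at hy ⊢
  linarith [hyk.2]

lemma le_measure_inter_hitsBelow_zero (hD : MeasurableSet D) (hDr : ∀ k y, reflect k y ∈ D ↔ y ∈ D)
    {δ : ℝ} (hδ : 0 ≤ δ) (hD0 : D ⊆ {y | 0 < y 0}) (hDδ : D ⊆ smallSteps δ) :
    Measure.pi ν (D ∩ {y | partialSum y (Fin.last n) ≤ 0}) +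
        Measure.pi ν (D ∩ {y | partialSum y (Fin.last n) < -(2 * δ)}) ≤
      Measure.pi ν (D ∩ hitsBelow 0) := by
  rw [measure_inter_hitsBelow_eq hD hDr 0]
  gcongr
  rintro y ⟨hyD, hy : partialSum y (Fin.last n) < -(2 * δ)⟩
  have hhit : y ∈ ⋃ k, firstHit 0 k := by
    rw [iUnion_firstHit]
    exact ⟨Fin.last n, by linarith⟩
  obtain ⟨k, hk⟩ := mem_iUnion.1 hhit
  refine mem_iUnion.2 ⟨k, ⟨hyD, hk⟩, ?_⟩
  -- the first passage below `0` is not at time `0`, and it undershoots `0` by at most `δ`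
  rcases Fin.eq_zero_or_eq_succ k with rfl | ⟨j, rfl⟩
  · exact absurd hk.2 (by simpa [partialSum_zero] using hD0 hyD)
  have hprev := hk.1 j.castSucc (Fin.castSucc_lt_succ_iff.2 le_rfl)
  have hstep := (abs_le.1 (hDδ hyD j.succ (Fin.succ_ne_zero j))).1
  show 0 < 2 * partialSum y j.succ - partialSum y (Fin.last n)
  rw [partialSum_succ]
  linarith

end Reflection

variable [∀ i, IsFiniteMeasure (ν i)]

-- Inside `D = {0 < y 0} ∩ smallSteps δ`, the event is the difference of `hitsBelow c` and
-- `hitsBelow 0`: bound the first from above and the second from below by reflection.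
theorem measure_minMemIoc_inter_smallSteps_le {c δ : ℝ} (hc : 0 ≤ c) (hδ : 0 ≤ δ) :
    Measure.pi ν (minMemIoc c ∩ smallSteps δ) ≤
      Measure.pi ν {y | partialSum y (Fin.last n) ∈ Ioc 0 c} +
        Measure.pi ν {y | partialSum y (Fin.last n) ∈ Ico (-(2 * δ)) c} := by
  set μ := Measure.pi ν
  set D : Set (Fin (n + 1) → ℝ) := {y | 0 < y 0} ∩ smallSteps δ
  have hD : MeasurableSet D :=
    (measurableSet_lt measurable_const (measurable_pi_apply 0)).inter (measurableSet_smallSteps δ)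
  have hDr (k y) : reflect k y ∈ D ↔ y ∈ D := by
    simp only [D, smallSteps, mem_inter_iff, mem_ofPred_eq, abs_reflect]
    rw [reflect, if_pos (Fin.zero_le k)]
  have hsplit : μ (minMemIoc c ∩ smallSteps δ) + μ (D ∩ hitsBelow 0) = μ (D ∩ hitsBelow c) := by
    rw [← minMemIoc_inter_smallSteps_union hc,
      measure_union _ (hD.inter (measurableSet_hitsBelow 0))]
    exact (disjoint_minMemIoc_hitsBelow_zero c).mono inter_subset_left inter_subset_right
  have hle : μ (D ∩ {y | partialSum y (Fin.last n) ≤ c}) ≤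
      μ (D ∩ {y | partialSum y (Fin.last n) ≤ 0}) +
        μ {y | partialSum y (Fin.last n) ∈ Ioc 0 c} := by
    refine (measure_mono ?_).trans (measure_union_le _ _)
    exact fun y ⟨hyD, hy⟩ => (le_or_gt (partialSum y (Fin.last n)) 0).imp (⟨hyD, ·⟩) (⟨·, hy⟩)
  have hlt : μ (D ∩ {y | partialSum y (Fin.last n) < c}) ≤
      μ (D ∩ {y | partialSum y (Fin.last n) < -(2 * δ)}) +
        μ {y | partialSum y (Fin.last n) ∈ Ico (-(2 * δ)) c} := by
    refine (measure_mono ?_).trans (measure_union_le _ _)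
    exact fun y ⟨hyD, hy⟩ =>
      (lt_or_ge (partialSum y (Fin.last n)) (-(2 * δ))).imp (⟨hyD, ·⟩) (⟨·, hy⟩)
  refine ENNReal.le_of_add_le_add_right (measure_ne_top μ (D ∩ hitsBelow 0)) ?_
  calc _ = μ (D ∩ hitsBelow c) := hsplit
    _ ≤ _ := measure_inter_hitsBelow_le hD hDr c
    _ ≤ _ := add_le_add hle hlt
    _ = _ := add_add_add_comm _ _ _ _
    _ ≤ _ := add_le_add
      (le_measure_inter_hitsBelow_zero hD hDr hδ inter_subset_left inter_subset_right) le_rfl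
    _ = _ := add_comm _ _

theorem measure_minMemIoc_union_neg_inter_smallSteps_le {c δ : ℝ} (hc : 0 ≤ c) (hδ : 0 ≤ δ) :
    Measure.pi ν ((minMemIoc c ∪ Neg.neg ⁻¹' minMemIoc c) ∩ smallSteps δ) ≤
      2 * (Measure.pi ν {y | partialSum y (Fin.last n) ∈ Ioc 0 c} +
        Measure.pi ν {y | partialSum y (Fin.last n) ∈ Ico (-(2 * δ)) c}) := by
  have hneg : Neg.neg ⁻¹' minMemIoc c ∩ smallSteps (n := n) δ =
      MeasurableEquiv.neg _ ⁻¹' (minMemIoc c ∩ smallSteps δ) := by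
    ext y
    simp [smallSteps]
  rw [union_inter_distrib_right, two_mul, hneg]
  refine (measure_union_le _ _).trans (add_le_add ?_ ?_)
  · exact measure_minMemIoc_inter_smallSteps_le ν hc hδ
  · rw [(measurePreserving_neg_pi ν).measure_preimage_equiv]
    exact measure_minMemIoc_inter_smallSteps_le ν hc hδ

end SymmetricWalk

open SymmetricWalk

section Grid

variable (a b : ℝ) (N : ℕ)

noncomputable def gridPoint (k : ℕ) : ℝ := a + k * ((b - a) / N)

noncomputable def gridTime : ℕ → ℝ
  | 0 => 0
  | k + 1 => gridPoint a b N k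

noncomputable def gridIncrements (f : ℝ → ℝ) : Fin (N + 1) → ℝ :=
  fun i => f (gridTime a b N (i + 1)) - f (gridTime a b N i)

variable {a b N}

lemma gridPoint_mem_Icc (hab : a ≤ b) {k : ℕ} (hk : k ≤ N) : gridPoint a b N k ∈ Icc a b := by
  have hmesh : 0 ≤ (b - a) / N := by have := sub_nonneg.2 hab; positivity
  refine ⟨le_add_of_nonneg_right (by positivity), ?_⟩
  rcases eq_or_ne N 0 with rfl | hN
  · simpa [gridPoint] using hab
  have : (k : ℝ) ≤ N := by exact_mod_cast hk
  calc gridPoint a b N k ≤ a + N * ((b - a) / N) := by unfold gridPoint; gcongr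
    _ = b := by field_simp; ring

lemma gridPoint_self (hN : N ≠ 0) : gridPoint a b N N = b := by
  unfold gridPoint; field_simp; ring

lemma gridPoint_succ_sub (k : ℕ) : gridPoint a b N (k + 1) - gridPoint a b N k = (b - a) / N := by
  unfold gridPoint; push_cast; ring

lemma monotone_gridTime (ha : 0 ≤ a) (hab : a ≤ b) : Monotone (gridTime a b N) := by
  have hmesh : 0 ≤ (b - a) / N := by have := sub_nonneg.2 hab; positivity
  refine monotone_nat_of_le_succ fun k => ?_
  cases k with
  | zero => simpa [gridTime, gridPoint] using ha
  | succ k => exact sub_nonneg.1 ((gridPoint_succ_sub k).symm ▸ hmesh)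

lemma partialSum_gridIncrements (f : ℝ → ℝ) (k : Fin (N + 1)) :
    SymmetricWalk.partialSum (gridIncrements a b N f) k = f (gridPoint a b N k) - f 0 :=
  SymmetricWalk.partialSum_telescope (fun m => f (gridTime a b N m)) k

lemma tendsto_gridPoint_floor (hab : a < b) {t : ℝ} (ht : a ≤ t) :
    Tendsto (fun N : ℕ => gridPoint a b N ⌊(t - a) / (b - a) * N⌋₊) atTop (𝓝 t) := by
  have hx : 0 ≤ (t - a) / (b - a) := div_nonneg (sub_nonneg.2 ht) (sub_pos.2 hab).le
  have h := ((tendsto_nat_floor_mul_div_atTop hx).comp tendsto_natCast_atTop_atTop).const_mul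
    (b - a) |>.const_add a
  convert h using 1
  · ext N
    simp only [gridPoint, Function.comp_apply, add_right_inj]
    ring
  · rw [mul_div_cancel₀ _ (sub_pos.2 hab).ne', add_sub_cancel]

lemma eventually_exists_abs_gridPoint_lt {f : ℝ → ℝ} (hab : a < b) {t c : ℝ} (ht : t ∈ Icc a b)
    (hf : ContinuousAt f t) (hc : |f t| < c) :
    ∀ᶠ N in atTop, ∃ k ≤ N, |f (gridPoint a b N k)| < c := by
  have hx : (t - a) / (b - a) ≤ 1 := (div_le_one (sub_pos.2 hab)).2 (by linarith [ht.2])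
  refine ((continuous_abs.continuousAt.comp hf).tendsto.comp
    (tendsto_gridPoint_floor hab ht.1)).eventually (gt_mem_nhds hc) |>.mono fun N hN => ?_
  refine ⟨_, Nat.floor_le_of_le ?_, hN⟩
  simpa using mul_le_of_le_one_left (Nat.cast_nonneg N) hx

lemma eventually_forall_abs_gridPoint_succ_sub_le {f : ℝ → ℝ} (hab : a ≤ b)
    (hf : ContinuousOn f (Icc a b)) {δ : ℝ} (hδ : 0 < δ) :
    ∀ᶠ N in atTop, ∀ k < N, |f (gridPoint a b N (k + 1)) - f (gridPoint a b N k)| ≤ δ := by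
  obtain ⟨ε, hε, hfε⟩ := Metric.uniformContinuousOn_iff.1
    (isCompact_Icc.uniformContinuousOn_of_continuous hf) δ hδ
  filter_upwards [(tendsto_const_div_atTop_nhds_zero_nat (b - a)).eventually (gt_mem_nhds hε)]
    with N hN k hk
  have hdist := hfε _ (gridPoint_mem_Icc hab hk) _ (gridPoint_mem_Icc hab hk.le) (by
    rw [Real.dist_eq, gridPoint_succ_sub, abs_of_nonneg (by have := sub_nonneg.2 hab; positivity)]
    exact hN)
  exact (Real.dist_eq _ _ ▸ hdist).le

end Grid

lemma eventually_gridIncrements_mem {f : ℝ → ℝ} (hf : Continuous f) (hf0 : f 0 = 0) {a b : ℝ}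
    (hab : a < b) {η : ℝ} (hpos : 0 < ⨅ t : Icc a b, |f t|) (hle : ⨅ t : Icc a b, |f t| ≤ η) :
    ∀ᶠ N in atTop, gridIncrements a b N f ∈
      (minMemIoc (2 * η) ∪ Neg.neg ⁻¹' minMemIoc (2 * η)) ∩ smallSteps η := by
  have hη : 0 < η := hpos.trans_le hle
  have : Nonempty (Icc a b) := ⟨⟨a, left_mem_Icc.2 hab.le⟩⟩
  have hne : ∀ t ∈ Icc a b, f t ≠ 0 := fun t ht h0 => by
    have := hpos.trans_le (ciInf_le ⟨0, fun _ ⟨s, hs⟩ => hs ▸ abs_nonneg _⟩ (⟨t, ht⟩ : Icc a b))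
    simp [h0] at this
  obtain ⟨⟨t, ht⟩, hft⟩ := exists_lt_of_ciInf_lt (hle.trans_lt (by linarith : η < 2 * η))
  filter_upwards [eventually_exists_abs_gridPoint_lt hab ht hf.continuousAt hft,
    eventually_forall_abs_gridPoint_succ_sub_le hab.le hf.continuousOn hη]
    with N ⟨k, hkN, hk⟩ hstep
  have hS (j : Fin (N + 1)) : partialSum (gridIncrements a b N f) j = f (gridPoint a b N j) := by
    rw [partialSum_gridIncrements, hf0, sub_zero]
  have hmem (j : Fin (N + 1)) : gridPoint a b N j ∈ Icc a b := gridPoint_mem_Icc hab.le j.is_le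
  have hkc := abs_lt.1 hk
  refine ⟨?_, fun i hi => ?_⟩
  · rcases forall_pos_or_forall_neg_of_ne_zero isPreconnected_Icc hf.continuousOn hne
      with hpos | hneg
    · refine .inl ⟨fun j => hS j ▸ hpos _ (hmem j), ⟨k, Nat.lt_succ_of_le hkN⟩, ?_⟩
      rw [hS]
      exact hkc.2.le
    · refine .inr ⟨fun j => ?_, ⟨k, Nat.lt_succ_of_le hkN⟩, ?_⟩
      · rw [partialSum_neg, hS, neg_pos]
        exact hneg _ (hmem j)
      · rw [partialSum_neg, hS]
        linarith [hkc.1]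
  · obtain ⟨j, rfl⟩ := Fin.exists_succ_eq.2 hi
    exact hstep j j.is_lt

namespace IsStdBrownianMotion

variable {Ω : Type*} [MeasurableSpace Ω] {P : Measure Ω} {W : ℝ → Ω → ℝ}

lemma map_increments (hW : IsStdBrownianMotion P W) {n : ℕ} (t : Fin (n + 2) → ℝ)
    (ht : ∀ i, 0 ≤ t i) (hmono : Monotone t) :
    P.map (fun ω (i : Fin (n + 1)) => W (t i.succ) ω - W (t i.castSucc) ω) =
      Measure.pi fun i => gaussianReal 0 (t i.succ - t i.castSucc).toNNReal := by
  refine ((hW.indep (n + 1) t ht hmono).map_fun_eq_pi_map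
    fun i => ((hW.meas _).sub (hW.meas _)).aemeasurable).trans ?_
  congr with i : 1
  exact hW.gauss _ _ (ht _) (hmono (Fin.castSucc_lt_succ_iff.2 le_rfl).le)

lemma measure_gridIncrements_preimage_le (hW : IsStdBrownianMotion P W) {a b : ℝ} (ha : 0 ≤ a)
    (hab : a ≤ b) {N : ℕ} (hN : N ≠ 0) {δ : ℝ} (hδ : 0 ≤ δ) :
    P ((fun ω => gridIncrements a b N (W · ω)) ⁻¹'
        ((minMemIoc (2 * δ) ∪ Neg.neg ⁻¹' minMemIoc (2 * δ)) ∩ smallSteps δ)) ≤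
      4 * gaussianReal 0 b.toNNReal (Icc (-(2 * δ)) (2 * δ)) := by
  have hΦ : Measurable fun ω => gridIncrements a b N (W · ω) :=
    measurable_pi_lambda _ fun i => (hW.meas _).sub (hW.meas _)
  have hmono := monotone_gridTime (N := N) ha hab
  set ν := fun i : Fin (N + 1) =>
    gaussianReal 0 (gridTime a b N (i + 1) - gridTime a b N i).toNNReal
  have hmap : P.map (fun ω => gridIncrements a b N (W · ω)) = Measure.pi ν :=
    hW.map_increments (fun i => gridTime a b N i) (fun i => hmono (Nat.zero_le i))
      fun _ _ hij => hmono hij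
  have hend {s : Set ℝ} (hs : MeasurableSet s) :
      Measure.pi ν {y | partialSum y (Fin.last N) ∈ s} = gaussianReal 0 b.toNNReal s := by
    have hpre : (fun ω => gridIncrements a b N (W · ω)) ⁻¹' {y | partialSum y (Fin.last N) ∈ s} =
        (fun ω => W b ω - W 0 ω) ⁻¹' s := by
      ext ω
      simp only [mem_preimage, mem_ofPred_eq, partialSum_gridIncrements, Fin.val_last,
        gridPoint_self hN]
    have hS : MeasurableSet {y | partialSum y (Fin.last N) ∈ s} := measurable_partialSum _ hs
    rw [← hmap, Measure.map_apply hΦ hS, hpre,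
      ← Measure.map_apply (f := fun ω => W b ω - W 0 ω) ((hW.meas b).sub (hW.meas 0)) hs,
      hW.gauss 0 b le_rfl (ha.trans hab), sub_zero]
  calc _ ≤ P.map (fun ω => gridIncrements a b N (W · ω))
        ((minMemIoc (2 * δ) ∪ Neg.neg ⁻¹' minMemIoc (2 * δ)) ∩ smallSteps δ) :=
        Measure.le_map_apply hΦ.aemeasurable _
    _ ≤ 2 * (Measure.pi ν {y | partialSum y (Fin.last N) ∈ Ioc 0 (2 * δ)} +
        Measure.pi ν {y | partialSum y (Fin.last N) ∈ Ico (-(2 * δ)) (2 * δ)}) := by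
      rw [hmap]
      exact measure_minMemIoc_union_neg_inter_smallSteps_le ν (by positivity) hδ
    _ ≤ 2 * (Measure.pi ν {y | partialSum y (Fin.last N) ∈ Icc (-(2 * δ)) (2 * δ)} +
        Measure.pi ν {y | partialSum y (Fin.last N) ∈ Icc (-(2 * δ)) (2 * δ)}) := by
      gcongr
      · exact fun y hy => ⟨by linarith [hy.1], hy.2⟩
      · exact fun y hy => ⟨hy.1, hy.2.le⟩
    _ = _ := by rw [hend measurableSet_Icc]; ring

end IsStdBrownianMotion

theorem stmt16 {Ω : Type*} [MeasurableSpace Ω] (P : Measure Ω) (W : ℝ → Ω → ℝ)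
    (hW : IsStdBrownianMotion P W) (a b eta : ℝ) (ha : 0 < a) (hab : a < b)
    (heta : 0 < eta) :
    P {ω | 0 < ⨅ t : Set.Icc a b, |W t ω| ∧ (⨅ t : Set.Icc a b, |W t ω|) ≤ eta} ≤
      ENNReal.ofReal ((16 * eta / Real.sqrt (2 * Real.pi)) *
        min (1 / Real.sqrt (b - a)) (1 / Real.sqrt a)) := by
  have hb : 0 < b := ha.trans hab
  have hpath : {ω | 0 < ⨅ t : Set.Icc a b, |W t ω| ∧ (⨅ t : Set.Icc a b, |W t ω|) ≤ eta} ≤ᵐ[P]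
      {ω | ∀ᶠ N in atTop, ω ∈ (fun ω => gridIncrements a b N (W · ω)) ⁻¹'
        ((minMemIoc (2 * eta) ∪ Neg.neg ⁻¹' minMemIoc (2 * eta)) ∩ smallSteps eta)} := by
    filter_upwards [hW.cont, hW.init] with ω hcont h0 ⟨hpos, hle⟩
    exact eventually_gridIncrements_mem hcont h0 hab hpos hle
  have hsqrt : √(2 * π * b.toNNReal) = √(2 * π) * √b := by
    rw [Real.coe_toNNReal _ hb.le, Real.sqrt_mul (by positivity)]
  have hmin : 1 / √b ≤ min (1 / √(b - a)) (1 / √a) :=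
    le_min (one_div_le_one_div_of_le (sqrt_pos.2 (sub_pos.2 hab)) (sqrt_le_sqrt (by linarith)))
      (one_div_le_one_div_of_le (sqrt_pos.2 ha) (sqrt_le_sqrt hab.le))
  calc _ ≤ _ := measure_mono_ae hpath
    _ ≤ 4 * gaussianReal 0 b.toNNReal (Icc (-(2 * eta)) (2 * eta)) :=
      measure_setOf_eventually_le P <| (eventually_ne_atTop 0).mono fun N hN =>
        hW.measure_gridIncrements_preimage_le ha.le hab.le hN heta.le
    _ ≤ 4 * ENNReal.ofReal ((2 * eta - -(2 * eta)) / √(2 * π * b.toNNReal)) := by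
      gcongr
      exact gaussianReal_Icc_le 0 (by simpa using hb) _ _
    _ = ENNReal.ofReal (16 * eta / √(2 * π) * (1 / √b)) := by
      rw [← ENNReal.ofReal_ofNat 4, ← ENNReal.ofReal_mul (by norm_num), hsqrt]
      congr 1
      field_simp
      ring
    _ ≤ _ := ENNReal.ofReal_le_ofReal (mul_le_mul_of_nonneg_left hmin (by positivity))
end
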